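/- For the functor G : mod k⟨X,Y⟩ → rep(Δ) defined by G(V;X,Y) = (V⊕V, V, V⊕V; α=(1,0)ᵀ, β=id, γ=[[0,X],[1,Y]]), for every V ≠ 0 the representation G(V;X,Y) has no simple representation of Δ as a direct summand. -/

import Mathlib

/-- A representation of the quiver `Δ` with vertices `1` (sink), `2`, `3` (sources),
one arrow `α : 2 → 1` and two arrows `β, γ : 3 → 1`. -/
structure DeltaRep (k : Type) [Field k] : Type 1 where
  V1 : Type
  V2 : Type
  V3 : Type
  [ac1 : AddCommGroup V1]
  [ac2 : AddCommGroup V2]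
  [ac3 : AddCommGroup V3]
  [mo1 : Module k V1]
  [mo2 : Module k V2]
  [mo3 : Module k V3]
  α : V2 →ₗ[k] V1
  β : V3 →ₗ[k] V1
  γ : V3 →ₗ[k] V1

attribute [instance] DeltaRep.ac1 DeltaRep.ac2 DeltaRep.ac3
attribute [instance] DeltaRep.mo1 DeltaRep.mo2 DeltaRep.mo3

/-- A morphism of representations of the quiver `Δ`. -/
@[ext] structure DeltaHom {k : Type} [Field k] (M N : DeltaRep k) where
  f1 : M.V1 →ₗ[k] N.V1
  f2 : M.V2 →ₗ[k] N.V2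
  f3 : M.V3 →ₗ[k] N.V3
  commα : f1 ∘ₗ M.α = N.α ∘ₗ f2
  commβ : f1 ∘ₗ M.β = N.β ∘ₗ f3
  commγ : f1 ∘ₗ M.γ = N.γ ∘ₗ f3

/-- The representation `G(V; X, Y)` of `Δ`: `V₁ = V ⊕ V`, `V₂ = V`, `V₃ = V ⊕ V`,
`α = (1,0)ᵀ`, `β = id`, `γ = [[0, X],[1, Y]]`. -/
def Gobj (k : Type) [Field k] (V : Type) [AddCommGroup V] [Module k V]
    (X Y : V →ₗ[k] V) : DeltaRep k where
  V1 := V × V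
  V2 := V
  V3 := V × V
  α := LinearMap.inl k V V
  β := LinearMap.id
  γ := LinearMap.prod (X ∘ₗ LinearMap.snd k V V)
        (LinearMap.fst k V V + Y ∘ₗ LinearMap.snd k V V)

/-- The action of `G` on a morphism of `k⟨X,Y⟩`-modules. -/
def Gmap (k : Type) [Field k] (V V' : Type) [AddCommGroup V] [Module k V]
    [AddCommGroup V'] [Module k V'] (X Y : V →ₗ[k] V) (X' Y' : V' →ₗ[k] V')
    (f : V →ₗ[k] V') (hX : f ∘ₗ X = X' ∘ₗ f) (hY : f ∘ₗ Y = Y' ∘ₗ f) :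
    DeltaHom (Gobj k V X Y) (Gobj k V' X' Y') where
  f1 := f.prodMap f
  f2 := f
  f3 := f.prodMap f
  commα := by
    apply LinearMap.ext; intro v
    show (f v, f 0) = (f v, (0 : V'))
    simp
  commβ := by
    apply LinearMap.ext; intro v
    rfl
  commγ := by
    apply LinearMap.ext; rintro ⟨v1, v2⟩
    have h1 := LinearMap.congr_fun hX v2
    have h2 := LinearMap.congr_fun hY v2
    simp only [LinearMap.comp_apply] at h1 h2
    show (f (X v2), f (v1 + Y v2)) = (X' (f v2), f v1 + Y' (f v2))
    rw [map_add, h1, h2]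

/-- A triple of submodules, one at each vertex, forms a subrepresentation of a
representation `M` of `Δ` when it is stable under the three structure maps. -/
def IsSubrep {k : Type} [Field k] (M : DeltaRep k)
    (U1 : Submodule k M.V1) (U2 : Submodule k M.V2) (U3 : Submodule k M.V3) : Prop :=
  U2.map M.α ≤ U1 ∧ U3.map M.β ≤ U1 ∧ U3.map M.γ ≤ U1

/-- For `V ≠ 0`, the representation `G(V; X, Y)` of `Δ` has no simple direct summand:
there is no direct sum decomposition of `G(V; X, Y)` into two subrepresentations one of
which has total dimension `1` (the simple representations of `Δ` being exactly the
one-dimensional ones `S(1), S(2), S(3)`). -/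
theorem Gobj_has_no_simple_direct_summand
    (k : Type) [Field k] (V : Type) [AddCommGroup V] [Module k V]
    [FiniteDimensional k V] [Nontrivial V] (X Y : V →ₗ[k] V) :
    ¬ ∃ (U1 W1 : Submodule k (Gobj k V X Y).V1) (U2 W2 : Submodule k (Gobj k V X Y).V2)
        (U3 W3 : Submodule k (Gobj k V X Y).V3),
      IsCompl U1 W1 ∧ IsCompl U2 W2 ∧ IsCompl U3 W3 ∧
      IsSubrep (Gobj k V X Y) U1 U2 U3 ∧ IsSubrep (Gobj k V X Y) W1 W2 W3 ∧
      Module.finrank k ↥U1 + Module.finrank k ↥U2 + Module.finrank k ↥U3 = 1 := by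
  rintro ⟨U1, W1, U2, W2, U3, W3, hc1, hc2, hc3, ⟨hα, hβ, hγ⟩, ⟨hα', hβ', hγ'⟩, hdim⟩
  haveI : FiniteDimensional k (Gobj k V X Y).V1 := by
    show FiniteDimensional k (V × V); infer_instance
  haveI : FiniteDimensional k (Gobj k V X Y).V2 := by
    show FiniteDimensional k V; infer_instance
  haveI : FiniteDimensional k (Gobj k V X Y).V3 := by
    show FiniteDimensional k (V × V); infer_instance
  -- Each of the three finranks is 0 or 1, exactly one being 1.
  rcases Nat.lt_or_ge (Module.finrank k ↥U2) 1 with h2 | h2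
  · rcases Nat.lt_or_ge (Module.finrank k ↥U3) 1 with h3 | h3
    · -- U2 = ⊥, U3 = ⊥, U1 one-dimensional
      have hU2 : U2 = ⊥ := Submodule.finrank_eq_zero.mp (by omega)
      have hU3 : U3 = ⊥ := Submodule.finrank_eq_zero.mp (by omega)
      have hW3 : W3 = ⊤ := by
        rw [hU3] at hc3
        exact codisjoint_bot.mp hc3.codisjoint.symm
      -- β = id, so W1 ⊇ W3 = ⊤
      have hW1 : W1 = ⊤ := by
        apply top_le_iff.mp
        have : (⊤ : Submodule k (Gobj k V X Y).V3).map (Gobj k V X Y).β ≤ W1 := by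
          rw [← hW3]; exact hβ'
        intro x _
        exact this ⟨x, Submodule.mem_top, rfl⟩
      have hU1 : U1 = ⊥ := by
        rw [hW1] at hc1
        exact disjoint_top.mp hc1.disjoint
      rw [hU1, hU2, hU3] at hdim
      simp [finrank_bot] at hdim
    · -- U3 ≠ ⊥ but U1 = ⊥, while β = id maps U3 into U1
      have hU1 : U1 = ⊥ := Submodule.finrank_eq_zero.mp (by omega)
      have hU3 : U3 = ⊥ := by
        apply le_bot_iff.mp
        have : U3.map (Gobj k V X Y).β ≤ (⊥ : Submodule k (Gobj k V X Y).V1) := by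
          rw [← hU1]; exact hβ
        intro x hx
        exact this ⟨x, hx, rfl⟩
      rw [hU3] at h3
      simp [finrank_bot] at h3
  · -- U2 ≠ ⊥ but U1 = ⊥, while α is injective
    have hU1 : U1 = ⊥ := Submodule.finrank_eq_zero.mp (by omega)
    have hU2 : U2 = ⊥ := by
      apply le_bot_iff.mp
      intro u hu
      have : (Gobj k V X Y).α u ∈ U2.map (Gobj k V X Y).α := ⟨u, hu, rfl⟩
      have h0 := hα this
      rw [hU1, Submodule.mem_bot] at h0
      have : (u, (0:V)) = ((0:V), (0:V)) := h0
      exact congrArg Prod.fst this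
    rw [hU2] at h2
    simp [finrank_bot] at h2
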